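/- arXiv:1511.04039 — 5 statements merged into one kernel-verified Lean document; each statement's English description precedes it below -/
import Mathlib

section
/- Every delta operator 𝔡 has a unique sequence of basic polynomials, i.e., a unique sequence (p_n)_{n≥0} in K[x] with p_0 = 1, p_n(0) = 0 for n ≥ 1, and 𝔡(p_n) = n·p_{n−1} for all n ≥ 1. -/
/-!
Expanding `d (f (X + a)) = (d f) (X + a)` at `0` gives
`d (X ^ n) = ∑ₖ (n choose k) (d (X ^ k))(0) X ^ (n - k)`; as `d 1 = 0` and `d X = c`, the operator
lowers degrees by exactly one and multiplies the leading coefficient by `n c`. So `ker d` consists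
of the constants and `d` is onto, and `p (n + 1)` is forced to be the preimage of `(n + 1) p n`
that vanishes at `0`.
-/

open Polynomial

/-- The shift operator `E_a : K[x] → K[x]`, `f(x) ↦ f(x+a)`, as a linear endomorphism. -/
noncomputable def shiftOp (K : Type*) [Field K] (a : K) : Module.End K (Polynomial K) :=
  (aeval (X + C a) : Polynomial K →ₐ[K] Polynomial K).toLinearMap

/-- A linear operator on `K[x]` is shift-invariant if it commutes with every shift `E_a`. -/
def IsShiftInvariant {K : Type*} [Field K] (s : Module.End K (Polynomial K)) : Prop :=
  ∀ a : K, s ∘ₗ shiftOp K a = shiftOp K a ∘ₗ s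

/-- A delta operator: shift-invariant and sends `X` to a nonzero constant. -/
def IsDeltaOperator {K : Type*} [Field K] (d : Module.End K (Polynomial K)) : Prop :=
  IsShiftInvariant d ∧ ∃ c : K, c ≠ 0 ∧ d X = C c

/-- The sequence of basic polynomials of a delta operator `d`. -/
def IsBasicSequence {K : Type*} [Field K] (d : Module.End K (Polynomial K))
    (p : ℕ → Polynomial K) : Prop :=
  p 0 = 1 ∧ (∀ n, 1 ≤ n → (p n).eval 0 = 0) ∧
    ∀ n, 1 ≤ n → d (p n) = (n : K) • p (n - 1)

/-- The generalized Gončarov basis associated with the pair `(d, z)`: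
`deg t_n = n` and `ε_{z_i}(d^i t_n) = n! δ_{i,n}`. -/
def IsGoncarovBasis {K : Type*} [Field K] (d : Module.End K (Polynomial K))
    (z : ℕ → K) (t : ℕ → Polynomial K) : Prop :=
  ∀ n, (t n).natDegree = n ∧
    ∀ i, ((d ^ i) (t n)).eval (z i) = if i = n then (n.factorial : K) else 0

theorem Polynomial.mem_degreeLT_iff_coeff_eq_zero {R : Type*} [Semiring R] {n : ℕ} {f : R[X]} :
    f ∈ degreeLT R n ↔ ∀ m, n ≤ m → f.coeff m = 0 :=
  mem_degreeLT.trans (degree_lt_iff_coeff_zero f n)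

namespace IsShiftInvariant

variable {K : Type*} [Field K] {s : Module.End K K[X]}

theorem eval_apply (hs : IsShiftInvariant s) (f : K[X]) (a : K) :
    (s f).eval a = (s (f.comp (X + C a))).eval 0 := by
  have h := LinearMap.congr_fun (hs a) f
  simp only [LinearMap.comp_apply, shiftOp, AlgHom.toLinearMap_apply, ← comp_eq_aeval] at h
  rw [h, eval_comp]
  simp

theorem apply_X_pow [Infinite K] (hs : IsShiftInvariant s) (n : ℕ) :
    s (X ^ n) = ∑ k ∈ Finset.range (n + 1), C (n.choose k * (s (X ^ k)).eval 0) * X ^ (n - k) := by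
  refine Polynomial.funext fun a => ?_
  have hexp : (X + C a) ^ n = ∑ k ∈ Finset.range (n + 1), (a ^ (n - k) * n.choose k) • X ^ k := by
    rw [add_pow]
    refine Finset.sum_congr rfl fun k _ => ?_
    rw [smul_eq_C_mul, C_mul, C_pow, mul_assoc, mul_comm, map_natCast]
  rw [hs.eval_apply, X_pow_comp, hexp, map_sum, eval_finsetSum, eval_finsetSum]
  refine Finset.sum_congr rfl fun k _ => ?_
  simp only [map_smul, eval_smul, smul_eq_mul, eval_mul, eval_C, eval_pow, eval_X]
  ring

variable {c : K}

theorem map_one (hs : IsShiftInvariant s) (hX : s X = C c) : s 1 = 0 := by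
  have h := LinearMap.congr_fun (hs 1) X
  simp only [LinearMap.comp_apply, shiftOp, AlgHom.toLinearMap_apply, aeval_X, hX, aeval_C,
    map_add] at h
  simpa using h

theorem map_C (hs : IsShiftInvariant s) (hX : s X = C c) (a : K) : s (C a) = 0 := by
  rw [← mul_one (C a), ← smul_eq_C_mul, map_smul, hs.map_one hX, smul_zero]

theorem apply_mem_degreeLT [Infinite K] (hs : IsShiftInvariant s) (hX : s X = C c) {n : ℕ}
    {p : K[X]} (hp : p ∈ degreeLT K (n + 1)) : s p ∈ degreeLT K n := by
  classical
  suffices degreeLT K (n + 1) ≤ (degreeLT K n).comap s from this hp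
  rw [degreeLT_eq_span_X_pow, Submodule.span_le, Finset.coe_image, Set.image_subset_iff]
  intro k hk
  rw [Finset.coe_range, Set.mem_Iio] at hk
  rw [Set.mem_preimage, SetLike.mem_coe, Submodule.mem_comap, hs.apply_X_pow,
    Finset.sum_range_succ', pow_zero, hs.map_one hX, eval_zero, mul_zero, C_0, zero_mul,
    add_zero]
  refine Submodule.sum_mem _ fun j hj => mem_degreeLT.2 ?_
  rw [Finset.mem_range] at hj
  exact (degree_C_mul_X_pow_le _ _).trans_lt (by norm_cast; omega)

theorem coeff_apply_X_pow_succ [Infinite K] (hs : IsShiftInvariant s) (hX : s X = C c) (n : ℕ) :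
    (s (X ^ (n + 1))).coeff n = (n + 1) * c := by
  rw [hs.apply_X_pow, finsetSum_coeff, Finset.sum_eq_single 1]
  · rw [coeff_C_mul_X_pow, if_pos (by omega)]
    simp [hX]
  · intro j hj hj1
    rw [Finset.mem_range] at hj
    rw [coeff_C_mul_X_pow, if_neg (by omega)]
  · simp

theorem coeff_apply [Infinite K] (hs : IsShiftInvariant s) (hX : s X = C c) {n : ℕ} {p : K[X]}
    (hp : p.natDegree ≤ n + 1) : (s p).coeff n = (n + 1) * c * p.coeff (n + 1) := by
  set a := p.coeff (n + 1)
  have hlower : p - C a * X ^ (n + 1) ∈ degreeLT K (n + 1) := by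
    refine mem_degreeLT_iff_coeff_eq_zero.2 fun m hm => ?_
    rcases hm.eq_or_lt with rfl | hlt
    · simp [a]
    · rw [coeff_sub, coeff_C_mul_X_pow, if_neg hlt.ne', coeff_eq_zero_of_natDegree_lt (by omega),
        sub_zero]
  have h := mem_degreeLT_iff_coeff_eq_zero.1 (hs.apply_mem_degreeLT hX hlower) n le_rfl
  rw [map_sub, coeff_sub, sub_eq_zero, ← smul_eq_C_mul, map_smul, coeff_smul,
    hs.coeff_apply_X_pow_succ hX, smul_eq_mul] at h
  rw [h, mul_comm]

theorem eq_C_of_apply_eq_zero [CharZero K] (hs : IsShiftInvariant s) (hX : s X = C c)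
    (hc : c ≠ 0) {p : K[X]} (hp : s p = 0) : p = C (p.eval 0) := by
  rw [← coeff_zero_eq_eval_zero]
  refine eq_C_of_natDegree_eq_zero (by_contra fun h => ?_)
  obtain ⟨n, hn⟩ := Nat.exists_eq_add_one_of_ne_zero h
  have hp0 : p ≠ 0 := by
    rintro rfl
    simp at hn
  have hlead := hs.coeff_apply hX hn.le
  rw [hp, coeff_zero, ← hn, coeff_natDegree] at hlead
  exact mul_ne_zero (mul_ne_zero (Nat.cast_add_one_ne_zero n) hc) (leadingCoeff_ne_zero.2 hp0)
    hlead.symm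

theorem degreeLT_le_range [CharZero K] (hs : IsShiftInvariant s) (hX : s X = C c) (hc : c ≠ 0)
    (n : ℕ) : degreeLT K n ≤ LinearMap.range s := by
  induction n with
  | zero =>
    intro f hf
    rw [mem_degreeLT_iff_coeff_eq_zero] at hf
    rw [show f = 0 from ext fun m => by simpa using hf m (Nat.zero_le m)]
    exact zero_mem _
  | succ n ih =>
    intro f hf
    set g := C (f.coeff n / ((n + 1) * c)) * X ^ (n + 1)
    have hg : g ∈ degreeLT K (n + 2) := mem_degreeLT.2 <|
      (degree_C_mul_X_pow_le _ _).trans_lt (by norm_cast; omega)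
    have hrest : f - s g ∈ degreeLT K n := by
      refine mem_degreeLT_iff_coeff_eq_zero.2 fun m hm => ?_
      rcases hm.eq_or_lt with rfl | hlt
      · rw [coeff_sub, hs.coeff_apply hX (natDegree_C_mul_X_pow_le _ _), coeff_C_mul_X_pow,
          if_pos rfl, mul_div_cancel₀ _ (mul_ne_zero (Nat.cast_add_one_ne_zero n) hc), sub_self]
      · rw [coeff_sub, mem_degreeLT_iff_coeff_eq_zero.1 hf m hlt,
          mem_degreeLT_iff_coeff_eq_zero.1 (hs.apply_mem_degreeLT hX hg) m hlt, sub_zero]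
    rw [← add_sub_cancel (s g) f]
    exact add_mem ⟨g, rfl⟩ (ih hrest)

theorem surjective [CharZero K] (hs : IsShiftInvariant s) (hX : s X = C c) (hc : c ≠ 0) :
    Function.Surjective s := fun f =>
  hs.degreeLT_le_range hX hc (f.natDegree + 1) <|
    mem_degreeLT_iff_coeff_eq_zero.2 fun _ hm => coeff_eq_zero_of_natDegree_lt hm

end IsShiftInvariant

section BasicSequence

variable {K : Type*} [Field K] {s : Module.End K K[X]}

noncomputable def basicSeqOfRightInverse (g : K[X] → K[X]) : ℕ → K[X]
  | 0 => 1
  | n + 1 =>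
    let q := g (((n + 1 : ℕ) : K) • basicSeqOfRightInverse g n)
    q - C (q.eval 0)

theorem isBasicSequence_basicSeqOfRightInverse (hC : ∀ a, s (C a) = 0) {g : K[X] → K[X]}
    (hg : Function.RightInverse g s) : IsBasicSequence s (basicSeqOfRightInverse g) := by
  refine ⟨rfl, ?_, ?_⟩ <;> rintro (_ | n) hn
  · omega
  · simp [basicSeqOfRightInverse]
  · omega
  · simp only [basicSeqOfRightInverse, map_sub, hg _, hC, sub_zero, Nat.add_sub_cancel]

theorem IsBasicSequence.unique (hker : ∀ f, s f = 0 → f = C (f.eval 0)) {p q : ℕ → K[X]}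
    (hp : IsBasicSequence s p) (hq : IsBasicSequence s q) : p = q := by
  funext n
  induction n with
  | zero => exact hp.1.trans hq.1.symm
  | succ n ih =>
    have hdiff : s (p (n + 1) - q (n + 1)) = 0 := by
      rw [map_sub, hp.2.2 _ n.succ_pos, hq.2.2 _ n.succ_pos, Nat.succ_sub_one, ih, sub_self]
    have h := hker _ hdiff
    rwa [eval_sub, hp.2.1 _ n.succ_pos, hq.2.1 _ n.succ_pos, sub_zero, C_0, sub_eq_zero] at h

end BasicSequence

theorem stmt1 {K : Type*} [Field K] [CharZero K] (d : Module.End K (Polynomial K))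
    (hd : IsDeltaOperator d) :
    ∃! p : ℕ → Polynomial K, IsBasicSequence d p := by
  obtain ⟨hs, c, hc, hX⟩ := hd
  have hbasic := isBasicSequence_basicSeqOfRightInverse (hs.map_C hX)
    (Function.rightInverse_surjInv (hs.surjective hX hc))
  exact ⟨_, hbasic, fun q hq => hq.unique (fun _ => hs.eq_C_of_apply_eq_zero hX hc) hbasic⟩
end

section
/- The sequence of basic polynomials of a delta operator is of binomial type: p_n(x+y) = Σ_{k=0}^n C(n,k) p_k(x) p_{n−k}(y) for all n. -/
open Polynomial

/-!
Induct on `n`. By shift invariance and the induction hypothesis, `d` maps both sides for `n + 1`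
to `n + 1` times the two sides for `n`, and both sides take the value `p_{n+1}(y)` at `x = 0`.
Their difference is thus a kernel element of `d` vanishing at `0`, hence zero: a delta operator
kills only constants, since it sends linear polynomials to nonzero constants and commutes with
differentiation, the latter by comparing Taylor coefficients in `a` of
`d (f(x + a)) = (d f)(x + a)`.
-/

open Finset

section ShiftInvariant

variable {K : Type*} [Field K] {d : Module.End K K[X]}

lemma shiftOp_apply (a : K) (f : K[X]) : shiftOp K a f = f.comp (X + C a) := by
  simp [shiftOp, aeval_def, comp, algebraMap_eq]

lemma IsShiftInvariant.apply_comp_X_add_C (hd : IsShiftInvariant d) (a : K) (f : K[X]) :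
    d (f.comp (X + C a)) = (d f).comp (X + C a) := by
  simpa [shiftOp_apply] using LinearMap.congr_fun (hd a) f

lemma comp_X_add_C_eq_sum_hasseDeriv (f : K[X]) (a : K) {N : ℕ} (hN : f.natDegree < N) :
    f.comp (X + C a) = ∑ k ∈ range N, a ^ k • hasseDeriv k f := by
  ext j
  have hdeg : (hasseDeriv j f).natDegree < N :=
    ((natDegree_hasseDeriv_le f j).trans (Nat.sub_le _ _)).trans_lt hN
  rw [← taylor_apply, taylor_coeff, eval_eq_sum_range' hdeg]
  simp only [finsetSum_coeff, coeff_smul, smul_eq_mul, hasseDeriv_coeff]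
  refine sum_congr rfl fun k _ => ?_
  rw [add_comm j k, Nat.choose_symm_add]
  ring

lemma eq_zero_of_forall_sum_pow_smul_eq_zero [Infinite K] {N : ℕ} {F : ℕ → K[X]}
    (h : ∀ a : K, ∑ k ∈ range N, a ^ k • F k = 0) {k : ℕ} (hk : k < N) : F k = 0 := by
  ext j
  -- the `j`-th coefficients of the `F k` are the coefficients of a polynomial vanishing on `K`
  set Q : K[X] := ∑ i ∈ range N, C ((F i).coeff j) * X ^ i
  have hQ : Q = 0 := Polynomial.funext fun a => by
    have := congrArg (coeff · j) (h a)
    simp only [finsetSum_coeff, coeff_smul, coeff_zero, smul_eq_mul] at this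
    simp only [Q, eval_finsetSum, eval_mul, eval_C, eval_pow, eval_X, eval_zero, ← this]
    exact sum_congr rfl fun i _ => mul_comm _ _
  simpa [Q, finsetSum_coeff, coeff_C_mul, coeff_X_pow, hk] using congrArg (coeff · k) hQ

lemma IsShiftInvariant.apply_hasseDeriv [Infinite K] (hd : IsShiftInvariant d) (k : ℕ)
    (f : K[X]) : d (hasseDeriv k f) = hasseDeriv k (d f) := by
  obtain ⟨N, hfN, hdfN, hkN⟩ : ∃ N, f.natDegree < N ∧ (d f).natDegree < N ∧ k < N :=
    ⟨max f.natDegree (d f).natDegree + k + 1, by omega, by omega, by omega⟩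
  refine sub_eq_zero.mp (eq_zero_of_forall_sum_pow_smul_eq_zero
    (F := fun k => d (hasseDeriv k f) - hasseDeriv k (d f)) (fun a => ?_) hkN)
  have hf := comp_X_add_C_eq_sum_hasseDeriv f a hfN
  have hdf := comp_X_add_C_eq_sum_hasseDeriv (d f) a hdfN
  have hshift := hd.apply_comp_X_add_C a f
  rw [hf, hdf, map_sum] at hshift
  simp only [map_smul] at hshift
  simp only [smul_sub, sum_sub_distrib, hshift, sub_self]

lemma IsShiftInvariant.apply_derivative [Infinite K] (hd : IsShiftInvariant d) (f : K[X]) :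
    d (derivative f) = derivative (d f) := by
  simpa only [hasseDeriv_one'] using hd.apply_hasseDeriv 1 f

lemma IsShiftInvariant.apply_one_eq_zero (hd : IsShiftInvariant d) {c : K} (hX : d X = C c) :
    d 1 = 0 := by
  have h := hd.apply_comp_X_add_C 1 X
  rw [X_comp, hX, C_comp, map_add, hX, C_1, add_eq_left] at h
  exact h

end ShiftInvariant

section DeltaOperator

variable {K : Type*} [Field K] [CharZero K] {d : Module.End K K[X]}

lemma IsDeltaOperator.apply_ne_zero (hd : IsDeltaOperator d) {f : K[X]}
    (hf : f.natDegree ≠ 0) : d f ≠ 0 := by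
  obtain ⟨hs, c, hc, hX⟩ := hd
  obtain ⟨m, hm⟩ : ∃ m, f.natDegree = m + 1 := ⟨_, (Nat.succ_pred_eq_of_ne_zero hf).symm⟩
  clear hf
  induction m generalizing f with
  | zero =>
    rw [zero_add] at hm
    have hlead : f.coeff 1 ≠ 0 := by
      rw [← hm, coeff_natDegree, leadingCoeff_ne_zero]
      rintro rfl
      simp at hm
    have hlin : f = f.coeff 1 • X + f.coeff 0 • (1 : K[X]) := by
      rw [smul_eq_C_mul, smul_eq_C_mul, mul_one]
      exact eq_X_add_C_of_natDegree_le_one hm.le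
    rw [hlin, map_add, map_smul, map_smul, hX, hs.apply_one_eq_zero hX, smul_zero, add_zero,
      Ne, smul_eq_zero, not_or]
    exact ⟨hlead, C_ne_zero.mpr hc⟩
  | succ m ih =>
    intro hdf
    refine ih (f := derivative f) (by simp [hm]) ?_
    rw [hs.apply_derivative, hdf, derivative_zero]

lemma IsDeltaOperator.eq_zero_of_apply_eq_zero (hd : IsDeltaOperator d) {f : K[X]}
    (hdf : d f = 0) (hf : f.eval 0 = 0) : f = 0 := by
  have hdeg : f.natDegree = 0 := by
    by_contra h
    exact hd.apply_ne_zero h hdf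
  rw [eq_C_of_natDegree_eq_zero hdeg, coeff_zero_eq_eval_zero, hf, C_0]

end DeltaOperator

section BasicSequence

variable {K : Type*} [Field K] {d : Module.End K K[X]} {p : ℕ → K[X]}

lemma IsBasicSequence.apply_binomial_sum (hp : IsBasicSequence d p) (hd1 : d 1 = 0)
    (b : ℕ → K) (n : ℕ) :
    d (∑ k ∈ range (n + 2), ((n + 1).choose k : K) • (b (n + 1 - k) • p k)) =
      ((n + 1 : ℕ) : K) • ∑ k ∈ range (n + 1), (n.choose k : K) • (b (n - k) • p k) := by
  rw [map_sum, sum_range_succ', hp.1, map_smul, map_smul, hd1, smul_zero, smul_zero, add_zero,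
    smul_sum]
  refine sum_congr rfl fun k _ => ?_
  have hchoose :
      ((n + 1).choose (k + 1) : K) * ((k + 1 : ℕ) : K) = ((n + 1 : ℕ) : K) * n.choose k := by
    exact_mod_cast congrArg (Nat.cast (R := K)) (Nat.add_one_mul_choose_eq n k).symm
  rw [map_smul, map_smul, hp.2.2 (k + 1) k.succ_pos, Nat.add_sub_cancel, Nat.add_sub_add_right]
  simp only [smul_smul]
  congr 1
  linear_combination b (n - k) * hchoose

lemma IsBasicSequence.eval_zero_binomial_sum (hp : IsBasicSequence d p) (b : ℕ → K) (n : ℕ) :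
    (∑ k ∈ range (n + 1), (n.choose k : K) • (b (n - k) • p k)).eval 0 = b n := by
  rw [eval_finsetSum, sum_range_succ', sum_eq_zero fun k _ => by
    simp [hp.2.1 (k + 1) k.succ_pos]]
  simp [hp.1]

end BasicSequence

theorem stmt2 {K : Type*} [Field K] [CharZero K] (d : Module.End K (Polynomial K))
    (hd : IsDeltaOperator d) (p : ℕ → Polynomial K) (hp : IsBasicSequence d p) :
    ∀ (n : ℕ) (y : K), (p n).comp (X + C y) =
      ∑ k ∈ Finset.range (n + 1),
        (n.choose k : K) • ((p (n - k)).eval y • p k) := by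
  have hd1 : d 1 = 0 := by
    obtain ⟨hs, c, -, hX⟩ := hd
    exact hs.apply_one_eq_zero hX
  intro n
  induction n with
  | zero => simp [hp.1]
  | succ n ih =>
    intro y
    refine sub_eq_zero.mp (hd.eq_zero_of_apply_eq_zero ?_ ?_)
    · rw [map_sub, sub_eq_zero, hd.1.apply_comp_X_add_C, hp.2.2 (n + 1) n.add_one_pos,
        Nat.add_sub_cancel, smul_comp, ih y, hp.apply_binomial_sum hd1 (fun k => (p k).eval y)]
    · rw [eval_sub, eval_comp, hp.eval_zero_binomial_sum (fun k => (p k).eval y)]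
      simp
end

section
/- Given a delta operator 𝔡 with basic sequence (p_n) and shift-invariant operators Φ_i = Σ_{j≥0} a_j^{(i)} 𝔡^{i+j} with a_0^{(i)} ≠ 0 for each i, there exists a unique sequence (f_n)_{n≥0} of polynomials with deg f_n = n and ε_0(Φ_i(f_n)) = n!·δ_{i,n} for all i, n ∈ ℕ. -/
open Polynomial

/-!
A shift-invariant operator satisfies `s f = ∑ₖ (s Xᵏ)(0) • D⁽ᵏ⁾ f` (Hasse derivatives `D⁽ᵏ⁾`),
since `(s f)(r) = (s (f(X + r)))(0)`. For a delta operator (`s 1 = 0`, `s X = c ≠ 0`) this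
gives `ε₀ (sᵐ f) = m! cᵐ [Xᵐ] f` whenever `deg f ≤ m`. Hence the functionals `ℓᵢ = ε₀ ∘ Φᵢ`
vanish below degree `i` and `ℓᵢ (Xⁱ) = aᵢ₀ i! cⁱ ≠ 0`. This triangularity makes
`f ↦ (ℓᵢ f)_{i ≤ n}` injective, hence bijective, on polynomials of degree `≤ n`, and the
preimage of `n! eₙ` has degree exactly `n`.
-/

theorem shiftOp_eq_taylor {K : Type*} [Field K] (a : K) : shiftOp K a = taylor a :=
  LinearMap.ext fun f => (taylor_apply (r := a) (f := f)).symm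

namespace IsShiftInvariant

variable {K : Type*} [Field K] {s : Module.End K K[X]}

theorem map_taylor (hs : IsShiftInvariant s) (a : K) (f : K[X]) :
    s (taylor a f) = taylor a (s f) := by
  simpa [shiftOp_eq_taylor] using LinearMap.congr_fun (hs a) f

theorem map_C_eq_zero (hs : IsShiftInvariant s) {c : K} (hX : s X = C c) (a : K) :
    s (C a) = 0 := by
  simpa [hX] using hs.map_taylor a X

theorem eq_sum_smul_hasseDeriv [Infinite K] (hs : IsShiftInvariant s) {f : K[X]} {N : ℕ}
    (hN : f.natDegree < N) :
    s f = ∑ k ∈ Finset.range N, (s (X ^ k)).eval 0 • hasseDeriv k f := by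
  refine Polynomial.funext fun r => ?_
  have htaylor : taylor r f = ∑ k ∈ Finset.range N, (hasseDeriv k f).eval r • X ^ k := by
    simp only [smul_X_eq_monomial, ← taylor_coeff]
    exact as_sum_range' _ _ (by rwa [natDegree_taylor])
  calc (s f).eval r = (s (taylor r f)).eval 0 := by rw [hs.map_taylor, taylor_eval, zero_add]
    _ = _ := by
      simp only [htaylor, map_sum, map_smul, eval_finsetSum, eval_smul, smul_eq_mul, mul_comm]

theorem coeff_map_of_natDegree_le [Infinite K] (hs : IsShiftInvariant s) {c : K}
    (hX : s X = C c) {f : K[X]} {k : ℕ} (hf : f.natDegree ≤ k + 1) :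
    (s f).coeff k = (k + 1) * f.coeff (k + 1) * c := by
  rw [hs.eq_sum_smul_hasseDeriv (show f.natDegree < k + 2 by omega), finsetSum_coeff,
    Finset.sum_eq_single 1]
  · simp only [pow_one, hX, eval_C, coeff_smul, hasseDeriv_coeff, smul_eq_mul,
      Nat.choose_one_right]
    push_cast
    ring
  · intro j _ hj
    rcases Nat.lt_or_gt_of_ne hj with h | h
    · obtain rfl : j = 0 := by omega
      have : s 1 = 0 := by simpa using hs.map_C_eq_zero hX 1
      simp [this]
    · simp [hasseDeriv_coeff, coeff_eq_zero_of_natDegree_lt (show f.natDegree < k + j by omega)]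
  · simp

theorem natDegree_map_le [Infinite K] (hs : IsShiftInvariant s) {c : K} (hX : s X = C c)
    (f : K[X]) : (s f).natDegree ≤ f.natDegree - 1 := by
  refine natDegree_le_iff_coeff_eq_zero.mpr fun k hk => ?_
  rw [hs.coeff_map_of_natDegree_le hX (by omega),
    coeff_eq_zero_of_natDegree_lt (show f.natDegree < k + 1 by omega)]
  ring

theorem coeff_pow_map_of_natDegree_le [Infinite K] (hs : IsShiftInvariant s) {c : K}
    (hX : s X = C c) {k m : ℕ} {f : K[X]} (hf : f.natDegree ≤ k + m) :
    ((s ^ m) f).coeff k = (k + m).descFactorial m * c ^ m * f.coeff (k + m) := by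
  induction m generalizing f with
  | zero => simp
  | succ m ih =>
    have hsf : (s f).natDegree ≤ k + m := (hs.natDegree_map_le hX f).trans (by omega)
    rw [pow_succ, Module.End.mul_apply, ih hsf, hs.coeff_map_of_natDegree_le hX (by omega),
      ← add_assoc, Nat.succ_descFactorial_succ]
    push_cast
    ring

theorem eval_zero_pow_map_of_natDegree_le [Infinite K] (hs : IsShiftInvariant s) {c : K}
    (hX : s X = C c) {m : ℕ} {f : K[X]} (hf : f.natDegree ≤ m) :
    ((s ^ m) f).eval 0 = m.factorial * c ^ m * f.coeff m := by
  rw [← coeff_zero_eq_eval_zero, hs.coeff_pow_map_of_natDegree_le hX (by omega), zero_add,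
    Nat.descFactorial_self]

theorem eval_zero_sum_smul_pow_map_of_natDegree_lt [Infinite K] (hs : IsShiftInvariant s)
    {c : K} (hX : s X = C c) (b : ℕ → K) (N : ℕ) {i : ℕ} {f : K[X]} (hf : f.natDegree < i) :
    (∑ j ∈ Finset.range N, b j • (s ^ (i + j)) f).eval 0 = 0 := by
  rw [eval_finsetSum]
  refine Finset.sum_eq_zero fun j _ => ?_
  rw [eval_smul, hs.eval_zero_pow_map_of_natDegree_le hX (by omega),
    coeff_eq_zero_of_natDegree_lt (by omega), mul_zero, smul_zero]

theorem eval_zero_sum_smul_pow_map_X_pow [Infinite K] (hs : IsShiftInvariant s)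
    {c : K} (hX : s X = C c) (b : ℕ → K) (N i : ℕ) :
    (∑ j ∈ Finset.range (N + 1), b j • (s ^ (i + j)) (X ^ i)).eval 0 =
      b 0 * (i.factorial * c ^ i) := by
  rw [eval_finsetSum, Finset.sum_eq_single 0]
  · simp [hs.eval_zero_pow_map_of_natDegree_le hX (natDegree_X_pow_le i)]
  · intro j _ hj
    rw [eval_smul,
      hs.eval_zero_pow_map_of_natDegree_le hX ((natDegree_X_pow_le i).trans (by omega)),
      coeff_X_pow, if_neg (by omega), mul_zero, smul_zero]
  · simp

end IsShiftInvariant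

section TriangularFunctionals

variable {K : Type*} [Field K] {ℓ : ℕ → K[X] →ₗ[K] K}

theorem map_natDegree_eq_leadingCoeff_mul (hlow : ∀ i f, f.natDegree < i → ℓ i f = 0)
    (f : K[X]) : ℓ f.natDegree f = f.leadingCoeff * ℓ f.natDegree (X ^ f.natDegree) := by
  have hlead : ℓ f.natDegree f.eraseLead = 0 := by
    rcases f.eraseLead_natDegree_lt_or_eraseLead_eq_zero with h | h
    · exact hlow _ _ h
    · rw [h, map_zero]
  have h := congrArg (ℓ f.natDegree) f.eraseLead_add_monomial_natDegree_leadingCoeff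
  rwa [map_add, hlead, zero_add, ← smul_X_eq_monomial, map_smul, smul_eq_mul, eq_comm] at h

theorem map_natDegree_ne_zero (hlow : ∀ i f, f.natDegree < i → ℓ i f = 0)
    (hdiag : ∀ i, ℓ i (X ^ i) ≠ 0) {f : K[X]} (hf : f ≠ 0) : ℓ f.natDegree f ≠ 0 := by
  rw [map_natDegree_eq_leadingCoeff_mul hlow]
  exact mul_ne_zero (leadingCoeff_ne_zero.mpr hf) (hdiag _)

theorem exists_natDegree_le_forall_map_eq (hlow : ∀ i f, f.natDegree < i → ℓ i f = 0)
    (hdiag : ∀ i, ℓ i (X ^ i) ≠ 0) (n : ℕ) (v : Fin (n + 1) → K) :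
    ∃ f : K[X], f.natDegree ≤ n ∧ ∀ i : Fin (n + 1), ℓ i f = v i := by
  have hdeg (g : degreeLT K (n + 1)) : (g : K[X]).natDegree ≤ n := by
    have hg : (g : K[X]) ∈ degreeLE K n := by rw [← degreeLT_succ_eq_degreeLE]; exact g.2
    rwa [mem_degreeLE, ← natDegree_le_iff_degree_le] at hg
  let Λ : degreeLT K (n + 1) →ₗ[K] Fin (n + 1) → K :=
    LinearMap.pi fun i => ℓ i ∘ₗ (degreeLT K (n + 1)).subtype
  have hΛ : Function.Injective Λ := by
    refine (injective_iff_map_eq_zero Λ).mpr fun g hg => ?_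
    by_contra hne
    exact map_natDegree_ne_zero hlow hdiag (by simpa using hne)
      (congr_fun hg ⟨_, Nat.lt_succ_of_le (hdeg g)⟩)
  obtain ⟨w, hw⟩ := (LinearMap.injective_iff_surjective
    (f := Λ ∘ₗ (degreeLTEquiv K (n + 1)).symm.toLinearMap)).mp
    (hΛ.comp (degreeLTEquiv K (n + 1)).symm.injective) v
  exact ⟨_, hdeg _, fun i => congr_fun hw i⟩

theorem existsUnique_natDegree_eq_forall_map_eq_ite
    (hlow : ∀ i f, f.natDegree < i → ℓ i f = 0) (hdiag : ∀ i, ℓ i (X ^ i) ≠ 0) (n : ℕ)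
    {b : K} (hb : b ≠ 0) :
    ∃! f : K[X], f.natDegree = n ∧ ∀ i, ℓ i f = if i = n then b else 0 := by
  obtain ⟨f, hf_deg, hf⟩ := exists_natDegree_le_forall_map_eq hlow hdiag n
    fun i => if (i : ℕ) = n then b else 0
  have hf_eq (i : ℕ) : ℓ i f = if i = n then b else 0 := by
    rcases Nat.lt_or_ge n i with h | h
    · rw [hlow i f (by omega), if_neg h.ne']
    · exact hf ⟨i, by omega⟩
  refine ⟨f, ⟨le_antisymm hf_deg ?_, hf_eq⟩, fun g ⟨_, hg⟩ => ?_⟩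
  · by_contra! h
    exact hb (by simpa using (hf_eq n).symm.trans (hlow n f h))
  · by_contra hne
    refine map_natDegree_ne_zero hlow hdiag (sub_ne_zero.mpr hne) ?_
    rw [map_sub, hg, hf_eq, sub_self]

end TriangularFunctionals

theorem existsUnique_forall_of_forall_existsUnique {ι α : Sort*} {P : ι → α → Prop}
    (h : ∀ i, ∃! x, P i x) : ∃! f : ι → α, ∀ i, P i (f i) :=
  ⟨fun i => (h i).exists.choose, fun i => (h i).exists.choose_spec,
    fun _ hg => funext fun i => (h i).unique (hg i) (h i).exists.choose_spec⟩

theorem IsDeltaOperator.existsUnique_natDegree_eq_eval_zero_sum_eq_ite {K : Type*} [Field K]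
    [CharZero K] {d : Module.End K K[X]} (hd : IsDeltaOperator d) {a : ℕ → ℕ → K}
    (ha : ∀ i, a i 0 ≠ 0) (n : ℕ) :
    ∃! f : K[X], f.natDegree = n ∧
      ∀ i, (∑ j ∈ Finset.range (n + 1), a i j • (d ^ (i + j)) f).eval 0 =
        if i = n then (n.factorial : K) else 0 := by
  obtain ⟨hs, c, hc, hX⟩ := hd
  let Φ (i : ℕ) : K[X] →ₗ[K] K := leval 0 ∘ₗ ∑ j ∈ Finset.range (n + 1), a i j • d ^ (i + j)
  have hΦ (i : ℕ) (f : K[X]) :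
      Φ i f = (∑ j ∈ Finset.range (n + 1), a i j • (d ^ (i + j)) f).eval 0 := by
    simp [Φ, eval_finsetSum]
  simp only [← hΦ]
  refine existsUnique_natDegree_eq_forall_map_eq_ite (fun i f hf => ?_) (fun i => ?_) n
    (Nat.cast_ne_zero.mpr n.factorial_ne_zero)
  · rw [hΦ, hs.eval_zero_sum_smul_pow_map_of_natDegree_lt hX _ _ hf]
  · rw [hΦ, hs.eval_zero_sum_smul_pow_map_X_pow hX]
    exact mul_ne_zero (ha i) (mul_ne_zero (Nat.cast_ne_zero.mpr i.factorial_ne_zero)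
      (pow_ne_zero _ hc))

theorem stmt3_general {K : Type*} [Field K] [CharZero K] (d : Module.End K (Polynomial K))
    (hd : IsDeltaOperator d)
    (a : ℕ → ℕ → K) (ha : ∀ i, a i 0 ≠ 0) :
    ∃! f : ℕ → Polynomial K, ∀ n, (f n).natDegree = n ∧
      ∀ i, (∑ j ∈ Finset.range (n + 1), a i j • (d ^ (i + j)) (f n)).eval 0 =
        if i = n then (n.factorial : K) else 0 :=
  existsUnique_forall_of_forall_existsUnique
    (hd.existsUnique_natDegree_eq_eval_zero_sum_eq_ite ha)

theorem stmt3 {K : Type*} [Field K] [CharZero K] (d : Module.End K (Polynomial K))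
    (hd : IsDeltaOperator d) (p : ℕ → Polynomial K) (hp : IsBasicSequence d p)
    (a : ℕ → ℕ → K) (ha : ∀ i, a i 0 ≠ 0) :
    ∃! f : ℕ → Polynomial K, ∀ n, (f n).natDegree = n ∧
      ∀ i, (∑ j ∈ Finset.range (n + 1), a i j • (d ^ (i + j)) (f n)).eval 0 =
        if i = n then (n.factorial : K) else 0 :=
  stmt3_general d hd a ha
end

section
/- Let (t_n) be the generalized Gončarov basis for (𝔡, Z). For fixed j ∈ ℕ define t_n^{(j)}(x) := 𝔡^j(t_{n+j})(x) / ((n+j)(n+j−1)⋯(n+1)). Then (t_n^{(j)})_{n≥0} is the generalized Gončarov basis for (𝔡, Z^{(j)}), where Z^{(j)} = (z_{i+j})_{i≥0}. In particular 𝔡^j(t_n) = n(n−1)⋯(n−j+1) · t_{n−j}^{(j)} for n ≥ j. -/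
open Polynomial

/-! A shift-invariant operator `d` on `K[X]`, `K` infinite, is a power series in the derivative:
evaluating `d p` at `a` as `(taylor a (d p))(0) = (d (taylor a p))(0)` gives
`d = ∑ₖ (d Xᵏ)(0) • ∂⁽ᵏ⁾` with Hasse derivatives `∂⁽ᵏ⁾`. For a delta operator the `k = 0`
coefficient vanishes and the `k = 1` coefficient is nonzero, so in characteristic zero `d` lowers
degrees by exactly one. Hence `dʲ t_{n+j}` has degree `n`, and
`(dⁱ (dʲ t_{n+j}))(z_{i+j}) = (n+j)! δ_{i,n}`, so rescaling by `n!/(n+j)!` yields the Gončarov basis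
of the shifted grid. -/

open Finset

section DeltaOperator

variable {K : Type*} [Field K] {d : Module.End K K[X]}

theorem shiftOp_apply_s6 (a : K) (p : K[X]) : shiftOp K a p = taylor a p := by
  simp [shiftOp, taylor_apply, aeval_def, comp]

theorem IsShiftInvariant.map_taylor_s6 (hd : IsShiftInvariant d) (a : K) (p : K[X]) :
    d (taylor a p) = taylor a (d p) := by
  simpa only [LinearMap.comp_apply, shiftOp_apply_s6] using LinearMap.congr_fun (hd a) p

theorem IsShiftInvariant.eval_apply_s6 (hd : IsShiftInvariant d) (p : K[X]) (a : K) :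
    (d p).eval a =
      ∑ k ∈ range (p.natDegree + 1), (hasseDeriv k p).eval a * (d (X ^ k)).eval 0 := by
  have hexp : taylor a p = ∑ k ∈ range (p.natDegree + 1), (hasseDeriv k p).eval a • X ^ k := by
    conv_lhs => rw [as_sum_range_C_mul_X_pow (taylor a p), natDegree_taylor]
    simp only [taylor_coeff, smul_eq_C_mul]
  calc (d p).eval a = (taylor a (d p)).eval 0 := by rw [taylor_eval, zero_add]
    _ = _ := by
      rw [← hd.map_taylor_s6, hexp, map_sum, eval_finsetSum]
      simp only [map_smul, eval_smul, smul_eq_mul]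

theorem IsShiftInvariant.apply_eq_sum_hasseDeriv [Infinite K] (hd : IsShiftInvariant d)
    (p : K[X]) :
    d p = ∑ k ∈ range (p.natDegree + 1), (d (X ^ k)).eval 0 • hasseDeriv k p :=
  Polynomial.funext fun a => by
    rw [hd.eval_apply_s6, eval_finsetSum]
    exact sum_congr rfl fun k _ => by rw [eval_smul, smul_eq_mul, mul_comm]

theorem IsDeltaOperator.map_one (hd : IsDeltaOperator d) : d 1 = 0 := by
  obtain ⟨hsi, c, -, hdX⟩ := hd
  have h := hsi.map_taylor_s6 1 X
  rw [taylor_X, hdX, taylor_C, map_add, hdX, C_1] at h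
  simpa using h

theorem IsDeltaOperator.natDegree_apply [CharZero K] (hd : IsDeltaOperator d) (p : K[X]) :
    (d p).natDegree = p.natDegree - 1 := by
  obtain ⟨c, hc, hdX⟩ := hd.2
  set m := p.natDegree
  have hsum := hd.1.apply_eq_sum_hasseDeriv p
  have hzero : (d (X ^ 0)).eval 0 = 0 := by rw [pow_zero, hd.map_one, eval_zero]
  have hle : (d p).natDegree ≤ m - 1 := by
    rw [hsum]
    refine natDegree_sum_le_of_forall_le _ _ fun k _ => ?_
    rcases k with _ | k
    · rw [hzero, zero_smul, natDegree_zero]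
      exact Nat.zero_le _
    · exact (natDegree_smul_le _ _).trans ((natDegree_hasseDeriv_le _ _).trans (by omega))
  rcases Nat.eq_zero_or_pos m with hm | hm
  · omega
  refine natDegree_eq_of_le_of_coeff_ne_zero hle ?_
  have hcoeff : (d p).coeff (m - 1) = c * (m * p.leadingCoeff) := by
    rw [hsum, finsetSum_coeff, sum_eq_single 1]
    · rw [pow_one, hdX, eval_C, coeff_smul, hasseDeriv_coeff, smul_eq_mul,
        Nat.sub_add_cancel hm, Nat.choose_one_right]
      rfl
    · intro k _ hk
      rcases k with _ | _ | k
      · rw [hzero, zero_smul, coeff_zero]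
      · exact absurd rfl hk
      · rw [coeff_smul, hasseDeriv_coeff, coeff_eq_zero_of_natDegree_lt (by omega), mul_zero,
          smul_zero]
    · intro h
      exact absurd (mem_range.2 (by omega)) h
  rw [hcoeff]
  have hp : p ≠ 0 := by rintro rfl; simp [m] at hm
  exact mul_ne_zero hc (mul_ne_zero (Nat.cast_ne_zero.2 hm.ne') (leadingCoeff_ne_zero.2 hp))

theorem IsDeltaOperator.natDegree_pow_apply [CharZero K] (hd : IsDeltaOperator d) (j : ℕ)
    (p : K[X]) : ((d ^ j) p).natDegree = p.natDegree - j := by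
  induction j with
  | zero => simp
  | succ j ih => rw [pow_succ', Module.End.mul_apply, hd.natDegree_apply, ih, Nat.sub_sub]

open Nat in
theorem IsGoncarovBasis.shift [CharZero K] (hd : IsDeltaOperator d) {z : ℕ → K}
    {t : ℕ → K[X]} (ht : IsGoncarovBasis d z t) (j : ℕ) :
    IsGoncarovBasis d (fun i => z (i + j))
      (fun n => ((n ! : K) / ((n + j)! : K)) • (d ^ j) (t (n + j))) := by
  intro n
  dsimp only
  have hfactorial (m : ℕ) : (m ! : K) ≠ 0 := Nat.cast_ne_zero.2 m.factorial_ne_zero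
  refine ⟨?_, fun i => ?_⟩
  · rw [smul_eq_C_mul, natDegree_C_mul (div_ne_zero (hfactorial _) (hfactorial _)),
      hd.natDegree_pow_apply, (ht _).1, Nat.add_sub_cancel]
  · rw [map_smul, ← Module.End.mul_apply, ← pow_add, eval_smul, (ht _).2, smul_eq_mul]
    by_cases hin : i = n
    · rw [if_pos (by omega), if_pos hin, div_mul_cancel₀ _ (hfactorial _)]
    · rw [if_neg (by omega), if_neg hin, mul_zero]

end DeltaOperator

theorem stmt6 {K : Type*} [Field K] [CharZero K] (d : Module.End K (Polynomial K))
    (hd : IsDeltaOperator d) (z : ℕ → K) (t : ℕ → Polynomial K)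
    (ht : IsGoncarovBasis d z t) (j : ℕ) :
    IsGoncarovBasis d (fun i => z (i + j))
      (fun n => ((n.factorial : K) / ((n + j).factorial : K)) • (d ^ j) (t (n + j))) ∧
    ∀ n, j ≤ n → (d ^ j) (t n) =
      (n.descFactorial j : K) •
        (((n - j).factorial : K) / (((n - j) + j).factorial : K)) •
          (d ^ j) (t ((n - j) + j)) := by
  refine ⟨ht.shift hd j, fun n hn => ?_⟩
  have hdesc : (n.descFactorial j : K) * (n - j).factorial = n.factorial := by
    exact_mod_cast (mul_comm _ _).trans (Nat.factorial_mul_descFactorial hn)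
  rw [Nat.sub_add_cancel hn, smul_smul, ← mul_div_assoc, hdesc,
    div_self (Nat.cast_ne_zero.2 n.factorial_ne_zero), one_smul]
end

section
/- Expansion formula: if (t_n) is the generalized Gončarov basis for (𝔡, Z), then every f ∈ K[x] satisfies f(x) = Σ_{i=0}^{deg f} (ε_{z_i}(𝔡^i f) / i!) · t_i(x). In particular (t_n) is a basis of K[x]. -/
open Polynomial

/-!
Since `deg tₙ = n`, the family `(tₙ)` is a basis of `K[x]` in which `f` only involves
`t₀, …, t_{deg f}`. The functionals `φᵢ f = ε_{zᵢ}(𝔡ⁱ f) / i!` (`goncarovCoeff`) are biorthogonal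
to `(tₙ)`, so `φᵢ` is the `i`-th coordinate functional of that basis.
-/

namespace Polynomial.Sequence

variable {R : Type*} [Ring R] [IsDomain R] (S : Sequence R) (hS : ∀ i, IsUnit (S i).leadingCoeff)

lemma basis_repr_support_subset_range (f : R[X]) :
    ((S.basis hS).repr f).support ⊆ Finset.range (f.natDegree + 1) := by
  have hf : f ∈ Submodule.span R (S.basis hS '' Set.Iio (f.natDegree + 1)) := by
    rw [show ⇑(S.basis hS) = S from _root_.funext fun i => S.basis_eq_self hS i,
      S.span_degreeLT fun i _ => hS i, mem_degreeLT]
    exact degree_le_natDegree.trans_lt (by exact_mod_cast Nat.lt_succ_self _)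
  rw [← Finset.coe_subset, Finset.coe_range]
  exact (S.basis hS).repr_support_subset_of_mem_span _ hf

lemma eq_sum_range_coord_smul (f : R[X]) :
    f = ∑ i ∈ Finset.range (f.natDegree + 1), (S.basis hS).coord i f • S i := by
  conv_lhs => rw [← (S.basis hS).linearCombination_repr f]
  rw [Finsupp.linearCombination_apply_of_mem_supported (hs := (Finsupp.mem_supported _ _).mpr
    (Finset.coe_subset.mpr (S.basis_repr_support_subset_range hS f)))]
  simp only [basis_eq_self, Module.Basis.coord_apply]

end Polynomial.Sequence

noncomputable def goncarovCoeff {K : Type*} [Field K] (d : Module.End K K[X]) (z : ℕ → K)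
    (i : ℕ) : K[X] →ₗ[K] K :=
  (i.factorial : K)⁻¹ • (leval (z i)).comp (d ^ i)

lemma goncarovCoeff_apply {K : Type*} [Field K] (d : Module.End K K[X]) (z : ℕ → K)
    (i : ℕ) (f : K[X]) : goncarovCoeff d z i f = ((d ^ i) f).eval (z i) / (i.factorial : K) := by
  simp [goncarovCoeff, div_eq_inv_mul]

namespace IsGoncarovBasis

variable {K : Type*} [Field K] [CharZero K] {d : Module.End K K[X]} {z : ℕ → K}
  {t : ℕ → K[X]} (ht : IsGoncarovBasis d z t)
include ht

lemma goncarovCoeff_apply_self (i n : ℕ) :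
    goncarovCoeff d z i (t n) = if i = n then 1 else 0 := by
  rw [goncarovCoeff_apply, (ht n).2 i]
  split_ifs with h
  · subst h
    exact div_self (Nat.cast_ne_zero.mpr i.factorial_ne_zero)
  · exact zero_div _

lemma ne_zero (n : ℕ) : t n ≠ 0 := by
  intro h
  simpa [h] using ht.goncarovCoeff_apply_self n n

noncomputable def toSequence : Sequence K where
  elems' := t
  degree_eq' n := by rw [degree_eq_natDegree (ht.ne_zero n), (ht n).1]

@[simp]
lemma toSequence_apply (n : ℕ) : ht.toSequence n = t n := rfl

lemma isUnit_leadingCoeff (n : ℕ) : IsUnit (ht.toSequence n).leadingCoeff :=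
  (leadingCoeff_ne_zero.mpr (ht.ne_zero n)).isUnit

lemma coord_basis_eq_goncarovCoeff (i : ℕ) :
    (ht.toSequence.basis ht.isUnit_leadingCoeff).coord i = goncarovCoeff d z i := by
  refine (ht.toSequence.basis ht.isUnit_leadingCoeff).ext fun n => ?_
  rw [Module.Basis.coord_apply, Module.Basis.repr_self, Finsupp.single_apply,
    Sequence.basis_eq_self, toSequence_apply, ht.goncarovCoeff_apply_self]
  simp only [eq_comm (a := n)]

end IsGoncarovBasis

theorem stmt12_general {K : Type*} [Field K] [CharZero K] (d : Module.End K (Polynomial K))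
    (z : ℕ → K) (t : ℕ → Polynomial K)
    (ht : IsGoncarovBasis d z t) :
    (∀ f : Polynomial K, f = ∑ i ∈ Finset.range (f.natDegree + 1),
        ((((d ^ i) f).eval (z i)) / (i.factorial : K)) • t i) ∧
    LinearIndependent K t ∧ Submodule.span K (Set.range t) = ⊤ := by
  refine ⟨fun f => ?_, ht.toSequence.linearIndependent, ht.toSequence.span ht.isUnit_leadingCoeff⟩
  conv_lhs => rw [ht.toSequence.eq_sum_range_coord_smul ht.isUnit_leadingCoeff f]
  simp only [ht.coord_basis_eq_goncarovCoeff, goncarovCoeff_apply, IsGoncarovBasis.toSequence_apply]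

theorem stmt12 {K : Type*} [Field K] [CharZero K] (d : Module.End K (Polynomial K))
    (hd : IsDeltaOperator d) (z : ℕ → K) (t : ℕ → Polynomial K)
    (ht : IsGoncarovBasis d z t) :
    (∀ f : Polynomial K, f = ∑ i ∈ Finset.range (f.natDegree + 1),
        ((((d ^ i) f).eval (z i)) / (i.factorial : K)) • t i) ∧
    LinearIndependent K t ∧ Submodule.span K (Set.range t) = ⊤ :=
  stmt12_general d z t ht
end
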